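/- arXiv:1610.06983 — 3 statements merged into one kernel-verified Lean document; each statement's English description precedes it below -/
import Mathlib

section
/- Let A, D be points on a circle centered at O, M a point with M ≠ O, and X the intersection of line AD with a line through M perpendicular to OM. Then |DM² − AM²| = 2·AD·OM·sin(∠AXM), where ∠AXM is the angle at X in triangle AXM (assume A ≠ X). -/
/-!
Since `OA = OD`, expanding `DM² − AM²` around `O` leaves `2 ⟪D − A, O − M⟫`. In the plane,
`OM ⟂ XM` makes `O − M` a normal vector of the line `XM`, so
`|⟪A − X, O − M⟫| = XA · OM · sin ∠AXM`; as `A − X` is a nonzero multiple of `D − A`,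
the common factor `XA / AD` cancels.
-/

open EuclideanGeometry

local notation "⟪" x ", " y "⟫" => inner ℝ x y

namespace Orientation

variable {V : Type*} [NormedAddCommGroup V] [InnerProductSpace ℝ V] [Fact (Module.finrank ℝ V = 2)]
  (o : Orientation ℝ V (Fin 2))

theorem abs_areaForm_eq_norm_mul_norm_mul_sin_angle (x y : V) :
    |o.areaForm x y| = ‖x‖ * ‖y‖ * Real.sin (InnerProductGeometry.angle x y) := by
  have h := o.inner_sq_add_areaForm_sq x y
  rw [← Real.sqrt_sq_eq_abs, mul_comm, InnerProductGeometry.sin_angle_mul_norm_mul_norm,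
    real_inner_self_eq_norm_sq, real_inner_self_eq_norm_sq]
  congr 1
  linarith

end Orientation

section

variable {V : Type*} [NormedAddCommGroup V] [InnerProductSpace ℝ V]

attribute [local instance] FiniteDimensional.of_fact_finrank_eq_two in
theorem abs_inner_eq_norm_mul_norm_mul_sin_angle_of_inner_eq_zero [Fact (Module.finrank ℝ V = 2)]
    (u : V) {v n : V} (hv : v ≠ 0) (hvn : ⟪v, n⟫ = 0) :
    |⟪u, n⟫| = ‖u‖ * ‖n‖ * Real.sin (InnerProductGeometry.angle u v) := by
  let o : Orientation ℝ V (Fin 2) := (Module.finBasisOfFinrankEq ℝ V Fact.out).orientation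
  have hv2 : 0 < ‖v‖ ^ 2 := by positivity
  -- Expand `⟪u, n⟫` in the orthogonal frame `v, J v`; the `v`-component of `n` vanishes.
  have key : ‖v‖ ^ 2 * ⟪u, n⟫ = o.areaForm v u * o.areaForm v n := by
    rw [← o.inner_mul_inner_add_areaForm_mul_areaForm v u n, hvn, mul_zero, zero_add]
  have habs := congrArg abs key
  rw [abs_mul, abs_mul, abs_of_pos hv2, o.abs_areaForm_eq_norm_mul_norm_mul_sin_angle,
    o.abs_areaForm_of_orthogonal hvn, InnerProductGeometry.angle_comm] at habs
  refine mul_left_cancel₀ hv2.ne' ?_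
  rw [habs]
  ring

theorem dist_sq_sub_dist_sq_eq_two_mul_inner_of_dist_eq {P : Type*} [MetricSpace P]
    [NormedAddTorsor V P] {O A D : P} (M : P) (h : dist O A = dist O D) :
    dist D M ^ 2 - dist A M ^ 2 = 2 * ⟪D -ᵥ A, O -ᵥ M⟫ := by
  have hO : ‖A -ᵥ O‖ ^ 2 = ‖D -ᵥ O‖ ^ 2 := by
    rw [← dist_eq_norm_vsub, ← dist_eq_norm_vsub, dist_comm, h, dist_comm]
  rw [dist_eq_norm_vsub V, dist_eq_norm_vsub V, ← vsub_add_vsub_cancel D O M,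
    ← vsub_add_vsub_cancel A O M, norm_add_sq_real, norm_add_sq_real, hO,
    ← vsub_sub_vsub_cancel_right D A O, inner_sub_left, ← neg_vsub_eq_vsub_rev M O,
    inner_neg_right, inner_neg_right]
  ring

end

theorem stmt2_general (O A D M X : EuclideanSpace ℝ (Fin 2))
    (hAD : dist O A = dist O D)
    (hX : X ∈ affineSpan ℝ ({A, D} : Set (EuclideanSpace ℝ (Fin 2))))
    (hXA : X ≠ A) (hXM : X ≠ M)
    (hperp : inner ℝ (X - M) (O - M) = (0 : ℝ)) :
    |dist D M ^ 2 - dist A M ^ 2| =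
      2 * dist A D * dist O M * Real.sin (∠ A X M) := by
  have : Fact (Module.finrank ℝ (EuclideanSpace ℝ (Fin 2)) = 2) := ⟨finrank_euclideanSpace_fin⟩
  obtain ⟨t, ht⟩ : ∃ t : ℝ, t • (D -ᵥ A) = X -ᵥ A :=
    vadd_left_mem_affineSpan_pair.mp (by rwa [vsub_vadd])
  have htne : t ≠ 0 := by
    rintro rfl
    exact hXA (vsub_eq_zero_iff_eq.mp (by rw [← ht, zero_smul]))
  have hAX : A -ᵥ X = (-t) • (D -ᵥ A) := by rw [neg_smul, ht, neg_vsub_eq_vsub_rev]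
  have hvn : ⟪M -ᵥ X, O -ᵥ M⟫ = 0 := by
    rw [← neg_vsub_eq_vsub_rev, inner_neg_left, vsub_eq_sub, vsub_eq_sub, hperp, neg_zero]
  have hsin := abs_inner_eq_norm_mul_norm_mul_sin_angle_of_inner_eq_zero (A -ᵥ X)
    (vsub_ne_zero.mpr hXM.symm) hvn
  rw [hAX, real_inner_smul_left, norm_smul, abs_mul, Real.norm_eq_abs, abs_neg, mul_assoc,
    mul_assoc] at hsin
  rw [dist_sq_sub_dist_sq_eq_two_mul_inner_of_dist_eq M hAD, abs_mul, abs_two,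
    mul_left_cancel₀ (abs_ne_zero.mpr htne) hsin, EuclideanGeometry.angle, hAX, dist_comm A D,
    dist_eq_norm_vsub, dist_eq_norm_vsub]
  ring

/-- Let `A`, `D` be points on a circle centered at `O`, `M` a point with `M ≠ O`, and `X`
the intersection of line `AD` with a line through `M` perpendicular to `OM`. Then
`|DM² − AM²| = 2 · AD · OM · sin(∠AXM)`. -/
theorem stmt2 (O A D M X : EuclideanSpace ℝ (Fin 2))
    (hAD : dist O A = dist O D) (hADne : A ≠ D) (hMO : M ≠ O)
    (hX : X ∈ affineSpan ℝ ({A, D} : Set (EuclideanSpace ℝ (Fin 2))))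
    (hXA : X ≠ A) (hXM : X ≠ M)
    (hperp : inner ℝ (X - M) (O - M) = (0 : ℝ)) :
    |dist D M ^ 2 - dist A M ^ 2| =
      2 * dist A D * dist O M * Real.sin (∠ A X M) :=
  stmt2_general O A D M X hAD hX hXA hXM hperp
end

section
/- Butterfly theorem: Let M be the midpoint of a chord PQ of a circle, and let AB and CD be two other chords through M, with A, C on one side of line PQ and B, D on the other side. Let X be the intersection of line AD with line PQ, and Y the intersection of line BC with line PQ. Then M is the midpoint of segment XY, i.e., dist(X,M) = dist(Y,M). -/
open EuclideanGeometry RealInnerProductSpace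

/-!
Put the origin at `M` and let `u = O - M` and `k = r² - ‖u‖²`, the power of `M`. Every chord
through `M` has the form `a, -λa` with `λ > 0`, and the circle forces `λ (k + 2⟪a, u⟫) = k`.
The line `PQ` is the line through `M` orthogonal to `u`, so intersecting it with `AD` and `BC`
is linear algebra in the two functionals `⟪·, u⟫` and `⟪·, Q - P⟫`: with `α = ⟪A - M, u⟫` and
`γ = ⟪C - M, u⟫`, the positions of `X` and `Y` along `PQ` are `μN / (α + μγ)` and
`-λN / (λα + γ)` for one and the same `N`. The two chord relations make these opposite.
-/

section

variable {V : Type*} [NormedAddCommGroup V] [InnerProductSpace ℝ V]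

lemma norm_sub_sq_sub_two_inner_of_dist_eq {o m z : V} {r : ℝ} (h : dist o z = r) :
    ‖z - m‖ ^ 2 - 2 * ⟪z - m, o - m⟫ = r ^ 2 - ‖o - m‖ ^ 2 := by
  rw [← h, dist_eq_norm, show o - z = (o - m) - (z - m) by abel,
    norm_sub_sq_real (x := o - m), real_inner_comm]
  ring

lemma Sbtw.exists_pos_smul_eq_neg {a m b : V} (h : Sbtw ℝ a m b) :
    ∃ l : ℝ, 0 < l ∧ b - m = -(l • (a - m)) := by
  obtain ⟨l, hl, hlab⟩ := h.wbtw.sameRay_vsub.exists_pos_left (vsub_ne_zero.2 h.ne_left)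
    (vsub_ne_zero.2 h.right_ne)
  exact ⟨l, hl, by rw [← vsub_eq_sub, ← hlab, ← smul_neg, neg_sub, vsub_eq_sub]⟩

/-- Power of a point: `‖MA‖ · ‖MB‖ = k` for a chord `AB` through `M`. -/
lemma mul_norm_sq_eq_of_neg_smul {u a : V} {k l : ℝ} (hl : 0 < l)
    (ha : ‖a‖ ^ 2 - 2 * ⟪a, u⟫ = k) (hb : ‖-(l • a)‖ ^ 2 - 2 * ⟪-(l • a), u⟫ = k) :
    l * ‖a‖ ^ 2 = k := by
  rw [norm_neg, norm_smul, inner_neg_left, real_inner_smul_left, mul_pow, Real.norm_eq_abs,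
    sq_abs] at hb
  have h : (l + 1) * (l * ‖a‖ ^ 2 - k) = 0 := by linear_combination hb + l * ha
  linarith [(mul_eq_zero.1 h).resolve_left (by positivity)]

lemma mul_inner_eq_of_mem_affineSpan_pair {a d z m u v : V} (hz : z ∈ line[ℝ, a, d])
    (hzu : ⟪z - m, u⟫ = 0) :
    (⟪a - m, u⟫ - ⟪d - m, u⟫) * ⟪z - m, v⟫ =
      ⟪a - m, u⟫ * ⟪d - m, v⟫ - ⟪d - m, u⟫ * ⟪a - m, v⟫ := by
  obtain ⟨s, hs⟩ : ∃ s : ℝ, s • (d - a) = z - a := Submodule.mem_span_singleton.1 <| by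
    simpa [direction_affineSpan, vectorSpan_pair_rev] using
      AffineSubspace.vsub_mem_direction hz (left_mem_affineSpan_pair ℝ a d)
  have hzm : z - m = (1 - s) • (a - m) + s • (d - m) := by
    rw [show z = s • (d - a) + a by rw [hs]; abel]; module
  rw [hzm, inner_add_left, real_inner_smul_left, real_inner_smul_left] at hzu ⊢
  linear_combination (⟪a - m, v⟫ - ⟪d - m, v⟫) * hzu

lemma sub_midpoint_mem_span_singleton {p q z : V} (hz : z ∈ line[ℝ, p, q]) :
    z - midpoint ℝ p q ∈ ℝ ∙ (q - p) := by
  have hm : midpoint ℝ p q ∈ line[ℝ, p, q] := AffineMap.lineMap_mem_affineSpan_pair _ p q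
  simpa [direction_affineSpan, vectorSpan_pair_rev] using AffineSubspace.vsub_mem_direction hz hm

lemma eq_zero_of_mem_span_singleton_of_inner_eq_zero {v w : V} (hw : w ∈ ℝ ∙ v)
    (h : ⟪w, v⟫ = 0) : w = 0 := by
  rw [← Submodule.mem_bot ℝ, ← (ℝ ∙ v).inf_orthogonal_eq_bot]
  exact ⟨hw, Submodule.mem_orthogonal_singleton_iff_inner_left.2 h⟩

end

/-- Multiplying by `k / μ` resp. `k / l` turns both coefficients into `k α + k γ + 2 α γ`,
which is symmetric in the two chords. -/
lemma butterfly_add_eq_zero {k α γ l μ N x y : ℝ} (hk : 0 < k) (hμ : 0 < μ)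
    (hαγ : 0 < α * γ) (hl : l * (k + 2 * α) = k) (hμγ : μ * (k + 2 * γ) = k)
    (hx : (α + μ * γ) * x = μ * N) (hy : (l * α + γ) * y = -(l * N)) : x + y = 0 := by
  have hx' : (k * α + k * γ + 2 * α * γ) * x = k * N := by
    linear_combination (k + 2 * γ) * hx + (N - γ * x) * hμγ
  have hy' : (k * α + k * γ + 2 * α * γ) * y = -(k * N) := by
    linear_combination (k + 2 * α) * hy - (N + α * y) * hl
  have hγ : 0 < k + 2 * γ := pos_of_mul_pos_right (hμγ.symm ▸ hk : 0 < μ * (k + 2 * γ)) hμ.le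
  have hne : k * α + k * γ + 2 * α * γ ≠ 0 := by
    intro h
    have h' : α * α * (k + 2 * γ) + k * (α * γ) = 0 := by linear_combination α * h
    nlinarith [mul_pos hk hαγ, mul_nonneg (mul_self_nonneg α) hγ.le]
  exact (mul_eq_zero.1 (by linear_combination hx' + hy' :
    (k * α + k * γ + 2 * α * γ) * (x + y) = 0)).resolve_left hne

theorem stmt5_general (O P Q A B C D M X Y : EuclideanSpace ℝ (Fin 2)) (r : ℝ)
    (hP : dist O P = r) (hQ : dist O Q = r)
    (hA : dist O A = r) (hB : dist O B = r) (hC : dist O C = r) (hD : dist O D = r)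
    (hM : M = midpoint ℝ P Q)
    (hAB : Sbtw ℝ A M B) (hCD : Sbtw ℝ C M D)
    (hACsame : 0 < (inner ℝ (A - M) (O - M) : ℝ) * (inner ℝ (C - M) (O - M) : ℝ))
    (hXAD : X ∈ affineSpan ℝ ({A, D} : Set (EuclideanSpace ℝ (Fin 2))))
    (hXPQ : X ∈ affineSpan ℝ ({P, Q} : Set (EuclideanSpace ℝ (Fin 2))))
    (hYBC : Y ∈ affineSpan ℝ ({B, C} : Set (EuclideanSpace ℝ (Fin 2))))
    (hYPQ : Y ∈ affineSpan ℝ ({P, Q} : Set (EuclideanSpace ℝ (Fin 2)))) :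
    dist X M = dist Y M := by
  set k := r ^ 2 - ‖O - M‖ ^ 2
  have onCircle : ∀ Z, dist O Z = r → ‖Z - M‖ ^ 2 - 2 * ⟪Z - M, O - M⟫ = k :=
    fun Z hZ => norm_sub_sq_sub_two_inner_of_dist_eq hZ
  obtain ⟨l, hl, hBA⟩ := hAB.exists_pos_smul_eq_neg
  obtain ⟨μ, hμ, hDC⟩ := hCD.exists_pos_smul_eq_neg
  have hlA := mul_norm_sq_eq_of_neg_smul hl (onCircle A hA) (hBA ▸ onCircle B hB)
  have hμC := mul_norm_sq_eq_of_neg_smul hμ (onCircle C hC) (hDC ▸ onCircle D hD)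
  have hk : 0 < k := hlA ▸ mul_pos hl (pow_pos (norm_pos_iff.2 (sub_ne_zero.2 hAB.left_ne)) 2)
  have alongPQ : ∀ Z ∈ line[ℝ, P, Q], Z - M ∈ ℝ ∙ (Q - P) :=
    fun Z hZ => hM ▸ sub_midpoint_mem_span_singleton hZ
  have hperp : ⟪O - M, Q - P⟫ = 0 :=
    inner_vsub_vsub_of_dist_eq_of_dist_eq (p₁ := P) (c₁ := M)
      (by rw [hM, dist_left_midpoint, dist_right_midpoint]) (by rw [dist_comm, hP, dist_comm, hQ])
  have onPQ : ∀ Z ∈ line[ℝ, P, Q], ⟪Z - M, O - M⟫ = 0 := fun Z hZ => by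
    obtain ⟨t, ht⟩ := Submodule.mem_span_singleton.1 (alongPQ Z hZ)
    rw [← ht, real_inner_smul_left, real_inner_comm, hperp, mul_zero]
  have hX := mul_inner_eq_of_mem_affineSpan_pair (v := Q - P) hXAD (onPQ X hXPQ)
  have hY := mul_inner_eq_of_mem_affineSpan_pair (v := Q - P) hYBC (onPQ Y hYPQ)
  simp only [hDC, hBA, inner_neg_left, real_inner_smul_left] at hX hY
  have hsum : ⟪X - M + (Y - M), Q - P⟫ = 0 := by
    rw [inner_add_left]
    exact butterfly_add_eq_zero (l := l)
      (N := ⟪C - M, O - M⟫ * ⟪A - M, Q - P⟫ - ⟪A - M, O - M⟫ * ⟪C - M, Q - P⟫) hk hμ hACsame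
      (by linear_combination hlA - l * onCircle A hA)
      (by linear_combination hμC - μ * onCircle C hC) (by linear_combination hX)
      (by linear_combination -hY)
  have hXY := eq_zero_of_mem_span_singleton_of_inner_eq_zero
    (add_mem (alongPQ X hXPQ) (alongPQ Y hYPQ)) hsum
  rw [dist_eq_norm, dist_eq_norm, eq_neg_of_add_eq_zero_right hXY, norm_neg]

/-- Butterfly theorem: `M` is the midpoint of chord `PQ`; chords `AB` and `CD` pass
through `M`, with `A, C` strictly on one side of line `PQ` and `B, D` strictly on the
other (sides of line `PQ` are measured by the sign of the inner product with `O − M`,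
which is normal to `PQ`). If `X` is the intersection of line `AD` with line `PQ` and
`Y` the intersection of line `BC` with line `PQ`, then `dist X M = dist Y M`. -/
theorem stmt5 (O P Q A B C D M X Y : EuclideanSpace ℝ (Fin 2)) (r : ℝ) (hr : 0 < r)
    (hP : dist O P = r) (hQ : dist O Q = r)
    (hA : dist O A = r) (hB : dist O B = r) (hC : dist O C = r) (hD : dist O D = r)
    (hM : M = midpoint ℝ P Q) (hPQ : P ≠ Q) (hMO : M ≠ O)
    (hAB : Sbtw ℝ A M B) (hCD : Sbtw ℝ C M D)
    (hACsame : 0 < (inner ℝ (A - M) (O - M) : ℝ) * (inner ℝ (C - M) (O - M) : ℝ))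
    (hABopp : (inner ℝ (A - M) (O - M) : ℝ) * (inner ℝ (B - M) (O - M) : ℝ) < 0)
    (hCDopp : (inner ℝ (C - M) (O - M) : ℝ) * (inner ℝ (D - M) (O - M) : ℝ) < 0)
    (hXAD : X ∈ affineSpan ℝ ({A, D} : Set (EuclideanSpace ℝ (Fin 2))))
    (hXPQ : X ∈ affineSpan ℝ ({P, Q} : Set (EuclideanSpace ℝ (Fin 2))))
    (hYBC : Y ∈ affineSpan ℝ ({B, C} : Set (EuclideanSpace ℝ (Fin 2))))
    (hYPQ : Y ∈ affineSpan ℝ ({P, Q} : Set (EuclideanSpace ℝ (Fin 2)))) :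
    dist X M = dist Y M :=
  stmt5_general O P Q A B C D M X Y r hP hQ hA hB hC hD hM hAB hCD hACsame hXAD hXPQ hYBC hYPQ
end

section
/- In the butterfly configuration, XM/YM = (AM/CM)·(AD/CB)·((BM² − CM²)/(DM² − AM²)), provided DM ≠ AM. Combined with AM·α = CM, DM·α = BM, AD·α = CB, this product equals 1. -/
/-!
Measure everything from `M`: with `a = A - M`, `c = C - M`, `o = O - M`, the chords through `M`
give `B - M = -s a` and `D - M = -u c` with `s‖a‖² = u‖c‖²` (intersecting chords), and
`dist A O = dist B O` gives `2⟪a, o⟫ = (1 - s)‖a‖²`, likewise for `c`. The chord `PQ` lies in the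
hyperplane through `M` orthogonal to `o`; cutting it with `AD` and `BC` expresses `X - M` and
`Y - M` as multiples of `⟪c, o⟫ a - ⟪a, o⟫ c` whose coefficients are opposite by those two
identities, so `XM = YM`.
For the product, the vertical angles `∠AMD = ∠CMB` and `AM·BM = CM·DM` turn the law of cosines
into `AD·CM = CB·AM`, after which the product collapses to `1`.
-/

open EuclideanGeometry AffineMap
open scoped RealInnerProductSpace

namespace EuclideanGeometry

variable {V P : Type*} [NormedAddCommGroup V] [InnerProductSpace ℝ V] [MetricSpace P]
  [NormedAddTorsor V P]

theorem smul_vsub_eq_of_mem_affineSpan_pair_of_inner_vsub_eq_zero {A D X M : P} {o : V}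
    (hX : X ∈ line[ℝ, A, D]) (hXo : ⟪X -ᵥ M, o⟫ = 0) :
    (⟪D -ᵥ M, o⟫ - ⟪A -ᵥ M, o⟫) • (X -ᵥ M) =
      ⟪D -ᵥ M, o⟫ • (A -ᵥ M) - ⟪A -ᵥ M, o⟫ • (D -ᵥ M) := by
  obtain ⟨k, rfl⟩ := mem_affineSpan_pair_iff_exists_lineMap_eq.1 hX
  have hXM : lineMap A D k -ᵥ M = (A -ᵥ M) + k • ((D -ᵥ M) - (A -ᵥ M)) := by
    rw [lineMap_apply, vadd_vsub_assoc, vsub_sub_vsub_cancel_right, add_comm]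
  rw [hXM, inner_add_left, real_inner_smul_left, inner_sub_left] at hXo
  rw [hXM]
  linear_combination (norm := module) hXo • ((D -ᵥ M) - (A -ᵥ M))

theorem inner_vsub_midpoint_eq_zero_of_mem_affineSpan_pair {O A B X : P}
    (hO : dist O A = dist O B) (hX : X ∈ line[ℝ, A, B]) :
    ⟪X -ᵥ midpoint ℝ A B, O -ᵥ midpoint ℝ A B⟫ = 0 := by
  have hOAB : ⟪O -ᵥ midpoint ℝ A B, B -ᵥ A⟫ = 0 :=
    AffineSubspace.mem_perpBisector_iff_inner_eq_zero.1
      (AffineSubspace.mem_perpBisector_iff_dist_eq.2 hO)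
  have hXM : X -ᵥ midpoint ℝ A B ∈ ℝ ∙ (B -ᵥ A) := by
    rw [← vectorSpan_pair_rev, ← direction_affineSpan]
    exact AffineSubspace.vsub_mem_direction hX (lineMap_mem_affineSpan_pair _ _ _)
  obtain ⟨t, ht⟩ := Submodule.mem_span_singleton.1 hXM
  rw [← ht, inner_smul_left, real_inner_comm, hOAB, mul_zero]

theorem _root_.Sbtw.exists_vsub_eq_neg_smul_vsub {A M B : P} (h : Sbtw ℝ A M B) :
    ∃ s : ℝ, 0 < s ∧ B -ᵥ M = -(s • (A -ᵥ M)) := by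
  obtain ⟨s, hs, hBM⟩ := h.wbtw.sameRay_vsub.exists_pos_left (vsub_ne_zero.2 h.ne_left)
    (vsub_ne_zero.2 h.ne_right.symm)
  exact ⟨s, hs, by rw [← hBM, ← smul_neg, neg_vsub_eq_vsub_rev]⟩

theorem two_inner_vsub_eq_of_dist_eq {A B M O : P} {s : ℝ} (hs : s ≠ -1)
    (hAB : dist A O = dist B O) (hBM : B -ᵥ M = -(s • (A -ᵥ M))) :
    2 * ⟪A -ᵥ M, O -ᵥ M⟫ = (1 - s) * ‖A -ᵥ M‖ ^ 2 := by
  have hsq : ‖(A -ᵥ M) - (O -ᵥ M)‖ ^ 2 = ‖-(s • (A -ᵥ M)) - (O -ᵥ M)‖ ^ 2 := by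
    rw [← hBM, vsub_sub_vsub_cancel_right, vsub_sub_vsub_cancel_right, ← dist_eq_norm_vsub,
      ← dist_eq_norm_vsub, hAB]
  rw [norm_sub_sq_real, norm_sub_sq_real, norm_neg, norm_smul, inner_neg_left,
    real_inner_smul_left, mul_pow, Real.norm_eq_abs, sq_abs] at hsq
  have h1s : 1 + s ≠ 0 := fun h => hs (by linarith)
  apply mul_left_cancel₀ h1s
  linear_combination -hsq

theorem dist_mul_dist_eq_of_cospherical_of_sbtw {A B C D M : P}
    (h : Cospherical ({A, B, C, D} : Set P)) (hAB : Sbtw ℝ A M B) (hCD : Sbtw ℝ C M D) :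
    dist A D * dist C M = dist C B * dist A M := by
  have hpow := mul_dist_eq_mul_dist_of_cospherical_of_angle_eq_pi h hAB.angle₁₂₃_eq_pi
    hCD.angle₁₂₃_eq_pi
  have hangle : ∠ A M D = ∠ C M B := by
    rw [angle_eq_angle_of_angle_eq_pi_of_angle_eq_pi hAB.angle₁₂₃_eq_pi
      hCD.symm.angle₁₂₃_eq_pi, angle_comm]
  have hAD := dist_sq_eq_dist_sq_add_dist_sq_sub_two_mul_dist_mul_dist_mul_cos_angle A M D
  have hCB := dist_sq_eq_dist_sq_add_dist_sq_sub_two_mul_dist_mul_dist_mul_cos_angle C M B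
  rw [hangle] at hAD
  refine (pow_left_inj₀ (by positivity) (by positivity) two_ne_zero).1 ?_
  linear_combination (dist C M ^ 2) * hAD - (dist A M ^ 2) * hCB
    - (dist D M * dist C M + dist B M * dist A M
      - 2 * dist A M * dist C M * Real.cos (∠ C M B)) * hpow

theorem Sphere.butterfly {S : Sphere P} {A B C D M X Y : P} (hA : A ∈ S)
    (hB : B ∈ S) (hC : C ∈ S) (hD : D ∈ S) (hAB : Sbtw ℝ A M B) (hCD : Sbtw ℝ C M D)
    (hAC : 0 < ⟪A -ᵥ M, S.center -ᵥ M⟫ * ⟪C -ᵥ M, S.center -ᵥ M⟫)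
    (hX : X ∈ line[ℝ, A, D]) (hXo : ⟪X -ᵥ M, S.center -ᵥ M⟫ = 0)
    (hY : Y ∈ line[ℝ, B, C]) (hYo : ⟪Y -ᵥ M, S.center -ᵥ M⟫ = 0) :
    X -ᵥ M = M -ᵥ Y := by
  obtain ⟨s, hs, hBM⟩ := hAB.exists_vsub_eq_neg_smul_vsub
  obtain ⟨u, hu, hDM⟩ := hCD.exists_vsub_eq_neg_smul_vsub
  have hpow : s * ‖A -ᵥ M‖ ^ 2 = u * ‖C -ᵥ M‖ ^ 2 := by
    have h := mul_dist_eq_mul_dist_of_cospherical_of_angle_eq_pi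
      (S.cospherical.subset (by rintro p (rfl | rfl | rfl | rfl) <;> assumption))
      hAB.angle₁₂₃_eq_pi hCD.angle₁₂₃_eq_pi
    rw [dist_eq_norm_vsub V, dist_eq_norm_vsub V B, dist_eq_norm_vsub V C, dist_eq_norm_vsub V D,
      hBM, hDM, norm_neg, norm_neg, norm_smul, norm_smul, Real.norm_of_nonneg hs.le,
      Real.norm_of_nonneg hu.le] at h
    linear_combination h
  have hα := two_inner_vsub_eq_of_dist_eq (by linarith) (hA.trans hB.symm) hBM
  have hγ := two_inner_vsub_eq_of_dist_eq (by linarith) (hC.trans hD.symm) hDM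
  have hX' := smul_vsub_eq_of_mem_affineSpan_pair_of_inner_vsub_eq_zero hX hXo
  have hY' := smul_vsub_eq_of_mem_affineSpan_pair_of_inner_vsub_eq_zero hY hYo
  rw [hDM, inner_neg_left, real_inner_smul_left] at hX'
  rw [hBM, inner_neg_left, real_inner_smul_left] at hY'
  set a := A -ᵥ M
  set c := C -ᵥ M
  set α := ⟪a, S.center -ᵥ M⟫
  set γ := ⟪c, S.center -ᵥ M⟫
  -- `hX'`, `hY'` amount to `(uγ + α) • (X -ᵥ M) = u • (γ • a - α • c)` and
  -- `(γ + sα) • (Y -ᵥ M) = -s • (γ • a - α • c)`: the coefficients are opposite iff `hcoeff`.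
  have hcoeff : u * γ * (1 - s) = s * α * (1 - u) := by
    linear_combination (u * (1 - s) / 2) * hγ - (s * (1 - u) / 2) * hα
      - ((1 - s) * (1 - u) / 2) * hpow
  have hXden : u * γ + α ≠ 0 := fun h => by nlinarith [mul_nonneg hu.le (sq_nonneg γ)]
  have hYden : γ + s * α ≠ 0 := fun h => by nlinarith [mul_nonneg hs.le (sq_nonneg α)]
  rw [← neg_vsub_eq_vsub_rev Y M, eq_neg_iff_add_eq_zero]
  apply smul_right_injective V (mul_ne_zero hXden hYden)
  simp only [smul_zero]
  linear_combination (norm := module) (-(γ + s * α)) • hX' + (u * γ + α) • hY'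
    + hcoeff • (γ • a - α • c)

end EuclideanGeometry

theorem div_mul_div_mul_div_eq_one_of_mul_eq_mul {am bm cm dm ad cb : ℝ} (ham : 0 < am)
    (hcm : 0 < cm) (hdm : 0 ≤ dm) (hcb : cb ≠ 0) (hpow : am * bm = cm * dm)
    (hsim : ad * cm = cb * am) (hne : dm ≠ am) :
    am / cm * (ad / cb) * ((bm ^ 2 - cm ^ 2) / (dm ^ 2 - am ^ 2)) = 1 := by
  have hden : dm ^ 2 - am ^ 2 ≠ 0 := by
    rw [sq_sub_sq]
    exact mul_ne_zero (by positivity) (sub_ne_zero.2 hne)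
  rw [eq_div_of_mul_eq ham.ne' (by linear_combination hpow : bm * am = cm * dm),
    eq_div_of_mul_eq hcm.ne' hsim]
  field_simp

theorem stmt10_general (O P Q A B C D M X Y : EuclideanSpace ℝ (Fin 2)) (r : ℝ)
    (hP : dist O P = r) (hQ : dist O Q = r)
    (hA : dist O A = r) (hB : dist O B = r) (hC : dist O C = r) (hD : dist O D = r)
    (hM : M = midpoint ℝ P Q)
    (hAB : Sbtw ℝ A M B) (hCD : Sbtw ℝ C M D)
    (hACsame : 0 < (inner ℝ (A - M) (O - M) : ℝ) * (inner ℝ (C - M) (O - M) : ℝ))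
    (hABopp : (inner ℝ (A - M) (O - M) : ℝ) * (inner ℝ (B - M) (O - M) : ℝ) < 0)
    (hXAD : X ∈ affineSpan ℝ ({A, D} : Set (EuclideanSpace ℝ (Fin 2))))
    (hXPQ : X ∈ affineSpan ℝ ({P, Q} : Set (EuclideanSpace ℝ (Fin 2))))
    (hYBC : Y ∈ affineSpan ℝ ({B, C} : Set (EuclideanSpace ℝ (Fin 2))))
    (hYPQ : Y ∈ affineSpan ℝ ({P, Q} : Set (EuclideanSpace ℝ (Fin 2))))
    (hYM : Y ≠ M)
    (hDMAM : dist D M ≠ dist A M) :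
    dist X M / dist Y M =
      (dist A M / dist C M) * (dist A D / dist C B) *
        ((dist B M ^ 2 - dist C M ^ 2) / (dist D M ^ 2 - dist A M ^ 2)) ∧
    dist X M / dist Y M = 1 := by
  let S : Sphere (EuclideanSpace ℝ (Fin 2)) := ⟨O, r⟩
  have hOPQ : dist O P = dist O Q := hP.trans hQ.symm
  have hXO := inner_vsub_midpoint_eq_zero_of_mem_affineSpan_pair hOPQ hXPQ
  have hYO := inner_vsub_midpoint_eq_zero_of_mem_affineSpan_pair hOPQ hYPQ
  rw [← hM] at hXO hYO
  have hXY : X -ᵥ M = M -ᵥ Y :=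
    Sphere.butterfly (S := S) (mem_sphere'.2 hA) (mem_sphere'.2 hB)
      (mem_sphere'.2 hC) (mem_sphere'.2 hD) hAB hCD hACsame hXAD hXO hYBC hYO
  have hXMYM : dist X M / dist Y M = 1 := by
    rw [dist_eq_norm_vsub, hXY, ← dist_eq_norm_vsub, dist_comm, div_self (dist_ne_zero.2 hYM)]
  have hABCD : Cospherical ({A, B, C, D} : Set (EuclideanSpace ℝ (Fin 2))) :=
    ⟨O, r, by rintro p (rfl | rfl | rfl | rfl) <;> rwa [dist_comm]⟩
  have hCB : C ≠ B := by
    rintro rfl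
    exact hABopp.not_gt hACsame
  have hpow := mul_dist_eq_mul_dist_of_cospherical_of_angle_eq_pi hABCD hAB.angle₁₂₃_eq_pi
    hCD.angle₁₂₃_eq_pi
  have hprod := div_mul_div_mul_div_eq_one_of_mul_eq_mul (dist_pos.2 hAB.left_ne)
    (dist_pos.2 hCD.left_ne) dist_nonneg (dist_ne_zero.2 hCB) hpow
    (dist_mul_dist_eq_of_cospherical_of_sbtw hABCD hAB hCD) hDMAM
  exact ⟨hXMYM.trans hprod.symm, hXMYM⟩

/-- In the butterfly configuration (with `DM ≠ AM`),
`XM/YM = (AM/CM)·(AD/CB)·((BM² − CM²)/(DM² − AM²))`, and this product equals `1`. -/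
theorem stmt10 (O P Q A B C D M X Y : EuclideanSpace ℝ (Fin 2)) (r : ℝ) (hr : 0 < r)
    (hP : dist O P = r) (hQ : dist O Q = r)
    (hA : dist O A = r) (hB : dist O B = r) (hC : dist O C = r) (hD : dist O D = r)
    (hM : M = midpoint ℝ P Q) (hPQ : P ≠ Q) (hMO : M ≠ O)
    (hAB : Sbtw ℝ A M B) (hCD : Sbtw ℝ C M D)
    (hACsame : 0 < (inner ℝ (A - M) (O - M) : ℝ) * (inner ℝ (C - M) (O - M) : ℝ))
    (hABopp : (inner ℝ (A - M) (O - M) : ℝ) * (inner ℝ (B - M) (O - M) : ℝ) < 0)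
    (hCDopp : (inner ℝ (C - M) (O - M) : ℝ) * (inner ℝ (D - M) (O - M) : ℝ) < 0)
    (hXAD : X ∈ affineSpan ℝ ({A, D} : Set (EuclideanSpace ℝ (Fin 2))))
    (hXPQ : X ∈ affineSpan ℝ ({P, Q} : Set (EuclideanSpace ℝ (Fin 2))))
    (hYBC : Y ∈ affineSpan ℝ ({B, C} : Set (EuclideanSpace ℝ (Fin 2))))
    (hYPQ : Y ∈ affineSpan ℝ ({P, Q} : Set (EuclideanSpace ℝ (Fin 2))))
    (hXA : X ≠ A) (hXM : X ≠ M) (hYC : Y ≠ C) (hYM : Y ≠ M)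
    (hDMAM : dist D M ≠ dist A M) :
    dist X M / dist Y M =
      (dist A M / dist C M) * (dist A D / dist C B) *
        ((dist B M ^ 2 - dist C M ^ 2) / (dist D M ^ 2 - dist A M ^ 2)) ∧
    dist X M / dist Y M = 1 :=
  stmt10_general O P Q A B C D M X Y r hP hQ hA hB hC hD hM hAB hCD hACsame hABopp hXAD hXPQ hYBC
    hYPQ hYM hDMAM
end
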